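/- For the ε-perturbed family of paths of the two-layer system, the path integral ∫₀¹ Φ_{h₁} ∂_s Φ_{h₂} ds equals [ (h₁ˡ)²(3+4ε) + 2(3+2ε)h₁ˡh₁ʳ + (3+4ε)(h₁ʳ)² ] · (h₂ʳ - h₂ˡ) / (6(1+ε)(h₁ʳ + h₁ˡ)), and for ε = 0 this reduces to ((h₁ˡ + h₁ʳ)/2)(h₂ʳ - h₂ˡ), the value for the family of segments. -/

import Mathlib

/-! Along the perturbed path `dh₂/dh₁` is affine in `h₁`, so the integrand `h₁ · dh₂/dh₁` is a
polynomial `p h₁ + q h₁²`; integrating the two monomials and clearing denominators gives the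
closed form, whose numerator at `ε = 0` is `3 (h₁ˡ + h₁ʳ)²`. -/

theorem integral_mul_add_mul_sq (a b p q : ℝ) :
    ∫ x in a..b, (p * x + q * x ^ 2) = p * ((b ^ 2 - a ^ 2) / 2) + q * ((b ^ 3 - a ^ 3) / 3) := by
  rw [intervalIntegral.integral_add, intervalIntegral.integral_const_mul,
    intervalIntegral.integral_const_mul, integral_id, integral_pow]
  · norm_num
  · exact intervalIntegral.intervalIntegrable_id.const_mul p
  · exact (intervalIntegral.intervalIntegrable_pow 2).const_mul q

/-- For the ε-perturbed family of paths of the two-layer system, the path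
integral `∫ Φ_{h₁} ∂_s Φ_{h₂} ds`, computed as
`∫_{h₁ˡ}^{h₁ʳ} h₁ (dh₂/dh₁) dh₁`, equals the stated rational expression, and
for `ε = 0` that expression reduces to `((h₁ˡ + h₁ʳ)/2)(h₂ʳ - h₂ˡ)`. -/
theorem perturbed_path_integral (h1l h1r h2l h2r ε : ℝ)
    (hne : h1l ≠ h1r) (hsum : h1l + h1r ≠ 0) (hε : -1 < ε) :
    (∫ x in h1l..h1r,
        x * ((1 / (h1r - h1l) + ε * (2 * x) / (h1r^2 - h1l^2)) *
          (h2r - h2l) / (1 + ε)))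
      = (h1l^2 * (3 + 4*ε) + 2*(3 + 2*ε)*h1l*h1r + (3 + 4*ε)*h1r^2) *
          (h2r - h2l) / (6 * (1 + ε) * (h1r + h1l)) ∧
    (h1l^2 * (3 + 4*0) + 2*(3 + 2*0)*h1l*h1r + (3 + 4*0)*h1r^2) *
        (h2r - h2l) / (6 * (1 + 0) * (h1r + h1l))
      = ((h1l + h1r) / 2) * (h2r - h2l) := by
  have hdiff : h1r - h1l ≠ 0 := sub_ne_zero.mpr hne.symm
  have hsum' : h1r + h1l ≠ 0 := by rwa [add_comm]
  have hε' : 1 + ε ≠ 0 := by linarith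
  have hsq : h1r ^ 2 - h1l ^ 2 = (h1r - h1l) * (h1r + h1l) := by ring
  constructor
  · have integrand : ∀ x : ℝ, x * ((1 / (h1r - h1l) + ε * (2 * x) / (h1r^2 - h1l^2)) *
        (h2r - h2l) / (1 + ε)) = (h2r - h2l) / (1 + ε) / (h1r - h1l) * x
          + 2 * ε * (h2r - h2l) / (1 + ε) / (h1r ^ 2 - h1l ^ 2) * x ^ 2 := fun x => by ring
    simp_rw [integrand, integral_mul_add_mul_sq, hsq]
    field_simp
    ring
  · have numerator : h1l^2 * (3 + 4*0) + 2*(3 + 2*0)*h1l*h1r + (3 + 4*0)*h1r^2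
        = 3 * (h1r + h1l) ^ 2 := by ring
    rw [numerator]
    field_simp
    ring
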